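/- Distributivity of the filtered faulty-language composition: for languages Lᵢ over Σᵢ with faulty parts Lᵢ,f ⊆ Lᵢ (i = 1, 2), and filter languages Σᵢ,ₒ^{≥Nᵢ} ⊆ Σᵢ,ₒ*, if Σo^{≥N̄} = Σ₁,ₒ^{≥N₁} ∥ Σ₂,ₒ^{≥N₂} for some N̄, then ((L₁,f ∥ L₂) ∪ (L₁ ∥ L₂,f)) ∥ Σo^{≥N̄} = (L₁,f^{≥N₁} ∥ L₂^{≥N₂}) ∪ (L₁^{≥N₁} ∥ L₂,f^{≥N₂}), where M^{≥N} denotes M ∩ (local projection)⁻¹(appropriate length-filtered language) and ∥ is the synchronous product. -/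
import Mathlib


open List Set

variable {α : Type*}

/-- Natural projection: erase letters outside `A`. -/
def proj (A : Set α) [DecidablePred (· ∈ A)] : List α → List α :=
  fun s => s.filter (fun a => decide (a ∈ A))

/-- Prefix-closure of a language. -/
def pref (M : Set (List α)) : Set (List α) := {t | ∃ s ∈ M, t <+: s}

/-- `K·Σ*` : all extensions of strings of `K`. -/
def catStar (K : Set (List α)) : Set (List α) := {w | ∃ s ∈ K, ∃ t, w = s ++ t}

/-- A language is prefix-closed if it contains every prefix of each member. -/
def prefixClosed (M : Set (List α)) : Prop := ∀ s ∈ M, ∀ t, t <+: s → t ∈ M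
/-- Synchronous product of A ⊆ Σ₁* and B ⊆ Σ₂*, as a language over Σ = Σ₁ ∪ Σ₂. -/
def sync (S1 S2 : Set α) [DecidablePred (· ∈ S1)] [DecidablePred (· ∈ S2)]
    (A B : Set (List α)) : Set (List α) :=
  {s | proj S1 s ∈ A} ∩ {s | proj S2 s ∈ B}

lemma proj_proj {A B : Set α} [DecidablePred (· ∈ A)] [DecidablePred (· ∈ B)]
    (h : A ⊆ B) (l : List α) : proj A (proj B l) = proj A l := by
  simp only [proj, List.filter_filter]
  refine List.filter_congr fun a _ => ?_
  by_cases hA : a ∈ A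
  · simp [hA, h hA]
  · simp [hA]

/-- distributivity of the filtered faulty-language composition:
    ((L₁f∥L₂) ∪ (L₁∥L₂f)) ∥ So^{≥N̄} = (L₁f^{≥N₁}∥L₂^{≥N₂}) ∪ (L₁^{≥N₁}∥L₂f^{≥N₂}),
    assuming So^{≥N̄} = Σ₁,ₒ^{≥N₁} ∥ Σ₂,ₒ^{≥N₂}. -/
theorem filtered_faultyComposition_distrib
    (S1 S2 So : Set α)
    [DecidablePred (· ∈ S1)] [DecidablePred (· ∈ S2)] [DecidablePred (· ∈ So)]
    [DecidablePred (· ∈ S1 ∩ So)] [DecidablePred (· ∈ S2 ∩ So)]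
    (L1 L1f L2 L2f : Set (List α))
    (hf1 : L1f ⊆ L1) (hL1 : L1 ⊆ {w | ∀ a ∈ w, a ∈ S1})
    (hf2 : L2f ⊆ L2) (hL2 : L2 ⊆ {w | ∀ a ∈ w, a ∈ S2})
    (N1 N2 Nbar : ℕ)
    -- So^{≥N̄} = Σ₁,ₒ^{≥N₁} ∥ Σ₂,ₒ^{≥N₂} (synchronous product over Σ₁,ₒ ∪ Σ₂,ₒ)
    (hN : {t : List α | (∀ a ∈ t, a ∈ So) ∧ Nbar ≤ t.length} =
        {t : List α | ∀ a ∈ t, a ∈ S1 ∩ So ∪ S2 ∩ So} ∩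
          {t | proj (S1 ∩ So) t ∈
              {u : List α | (∀ a ∈ u, a ∈ S1 ∩ So) ∧ N1 ≤ u.length}} ∩
          {t | proj (S2 ∩ So) t ∈
              {u : List α | (∀ a ∈ u, a ∈ S2 ∩ So) ∧ N2 ≤ u.length}}) :
    (sync S1 S2 L1f L2 ∪ sync S1 S2 L1 L2f) ∩
        {s | proj So s ∈ {t : List α | (∀ a ∈ t, a ∈ So) ∧ Nbar ≤ t.length}} =
      sync S1 S2
          (L1f ∩ {s | proj (S1 ∩ So) s ∈
              {u : List α | (∀ a ∈ u, a ∈ S1 ∩ So) ∧ N1 ≤ u.length}})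
          (L2 ∩ {s | proj (S2 ∩ So) s ∈
              {u : List α | (∀ a ∈ u, a ∈ S2 ∩ So) ∧ N2 ≤ u.length}}) ∪
        sync S1 S2
          (L1 ∩ {s | proj (S1 ∩ So) s ∈
              {u : List α | (∀ a ∈ u, a ∈ S1 ∩ So) ∧ N1 ≤ u.length}})
          (L2f ∩ {s | proj (S2 ∩ So) s ∈
              {u : List α | (∀ a ∈ u, a ∈ S2 ∩ So) ∧ N2 ≤ u.length}}) := by
  -- So ⊆ S1 ∪ S2, extracted from hN via replicate lists
  have hSo : ∀ a ∈ So, a ∈ S1 ∨ a ∈ S2 := by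
    intro a ha
    have hmem : List.replicate (Nbar + 1) a ∈
        {t : List α | (∀ b ∈ t, b ∈ So) ∧ Nbar ≤ t.length} := by
      constructor
      · intro b hb; rw [List.eq_of_mem_replicate hb]; exact ha
      · simp
    rw [hN] at hmem
    have := hmem.1.1 a (by simp)
    rcases this with h | h
    · exact Or.inl h.1
    · exact Or.inr h.1
  have h1o : (S1 ∩ So : Set α) ⊆ So := inter_subset_right
  have h2o : (S2 ∩ So : Set α) ⊆ So := inter_subset_right
  have h11 : (S1 ∩ So : Set α) ⊆ S1 := inter_subset_left
  have h22 : (S2 ∩ So : Set α) ⊆ S2 := inter_subset_left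
  ext s
  simp only [sync, mem_union, mem_inter_iff, mem_setOf_eq]
  constructor
  · rintro ⟨hcase, hfilt⟩
    obtain ⟨⟨-, hp1⟩, hp2⟩ := (Set.ext_iff.mp hN (proj So s)).mp hfilt
    simp only [mem_setOf_eq] at hp1 hp2
    rw [proj_proj h1o] at hp1
    rw [proj_proj h2o] at hp2
    rw [← proj_proj h11 s] at hp1
    rw [← proj_proj h22 s] at hp2
    rcases hcase with ⟨ha, hb⟩ | ⟨ha, hb⟩
    · exact Or.inl ⟨⟨ha, hp1⟩, ⟨hb, hp2⟩⟩
    · exact Or.inr ⟨⟨ha, hp1⟩, ⟨hb, hp2⟩⟩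
  · intro hcase
    have key : ∀ (h1 : proj S1 s ∈ L1) (h2 : proj S2 s ∈ L2)
        (hp1 : proj (S1 ∩ So) (proj S1 s) ∈
          {u : List α | (∀ a ∈ u, a ∈ S1 ∩ So) ∧ N1 ≤ u.length})
        (hp2 : proj (S2 ∩ So) (proj S2 s) ∈
          {u : List α | (∀ a ∈ u, a ∈ S2 ∩ So) ∧ N2 ≤ u.length}),
        proj So s ∈ {t : List α | (∀ a ∈ t, a ∈ So) ∧ Nbar ≤ t.length} := by
      intro h1 h2 hp1 hp2
      refine (Set.ext_iff.mp hN (proj So s)).mpr ⟨⟨?_, ?_⟩, ?_⟩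
      · intro a hamem
        have haSo : a ∈ So := by
          have := List.of_mem_filter hamem
          simpa using this
        rcases hSo a haSo with h | h
        · exact Or.inl ⟨h, haSo⟩
        · exact Or.inr ⟨h, haSo⟩
      · show proj (S1 ∩ So) (proj So s) ∈ {u : List α | (∀ a ∈ u, a ∈ S1 ∩ So) ∧ N1 ≤ u.length}
        rw [proj_proj h1o]
        rw [proj_proj h11 s] at hp1
        exact hp1
      · show proj (S2 ∩ So) (proj So s) ∈ {u : List α | (∀ a ∈ u, a ∈ S2 ∩ So) ∧ N2 ≤ u.length}
        rw [proj_proj h2o]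
        rw [proj_proj h22 s] at hp2
        exact hp2
    rcases hcase with ⟨⟨ha, hpa⟩, ⟨hb, hpb⟩⟩ | ⟨⟨ha, hpa⟩, ⟨hb, hpb⟩⟩
    · exact ⟨Or.inl ⟨ha, hb⟩, key (hf1 ha) hb hpa hpb⟩
    · exact ⟨Or.inr ⟨ha, hb⟩, key ha (hf2 hb) hpa hpb⟩
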